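/- arXiv:2309.09172 — 2 statements merged into one kernel-verified Lean document; each statement's English description precedes it below -/
import Mathlib

section
/- For a smooth function u on ℝ^m × ℝ^n and points away from the degenerate set, the Baouendi-Grushin gradients satisfy ∇_X u · ∇_X ρ = (Zu/ρ)·ψ, where Z is the generator of dilations, ρ is the gauge norm and ψ = |x|^{2α}/ρ^{2α}. -/
open MeasureTheory Real

noncomputable section

abbrev E (m n : ℕ) := EuclideanSpace ℝ (Fin m) × EuclideanSpace ℝ (Fin n)

/-- The gauge norm `ρ(x,y) = (|x|^{2(α+1)} + (α+1)²|y|²)^{1/(2(α+1))}`. -/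
def rho {m n : ℕ} (α : ℝ) (z : E m n) : ℝ :=
  (‖z.1‖ ^ (2*(α+1)) + (α+1)^2 * ‖z.2‖^2) ^ (1/(2*(α+1)))

/-- The angle function `ψ = |x|^{2α}/ρ^{2α}`. -/
def psi {m n : ℕ} (α : ℝ) (z : E m n) : ℝ :=
  ‖z.1‖ ^ (2*α) / (rho α z) ^ (2*α)

/-- The gauge ball of radius `r`. -/
def gball {m n : ℕ} (α r : ℝ) : Set (E m n) := {z | rho α z < r}

/-- The gauge sphere of radius `r`. -/
def gsphere {m n : ℕ} (α r : ℝ) : Set (E m n) := {z | rho α z = r}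

/-- Squared norm of the Baouendi-Grushin gradient `∇_X u = (∇_x u, |x|^α ∇_y u)`. -/
def gradXsq {m n : ℕ} (α : ℝ) (u : E m n → ℝ) (z : E m n) : ℝ :=
  (∑ i, (fderiv ℝ u z (EuclideanSpace.single i 1, 0))^2)
  + ‖z.1‖ ^ (2*α) * (∑ j, (fderiv ℝ u z (0, EuclideanSpace.single j 1))^2)

/-- The Baouendi-Grushin Laplacian `Δ_X u = Δ_x u + |x|^{2α} Δ_y u`. -/
def lapX {m n : ℕ} (α : ℝ) (u : E m n → ℝ) (z : E m n) : ℝ :=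
  (∑ i, fderiv ℝ (fun w => fderiv ℝ u w (EuclideanSpace.single i 1, 0)) z
      (EuclideanSpace.single i 1, 0))
  + ‖z.1‖ ^ (2*α) *
    (∑ j, fderiv ℝ (fun w => fderiv ℝ u w (0, EuclideanSpace.single j 1)) z
      (0, EuclideanSpace.single j 1))

/-- The generator of anisotropic dilations `Zu = x·∇_x u + (α+1) y·∇_y u`. -/
def Zop {m n : ℕ} (α : ℝ) (u : E m n → ℝ) (z : E m n) : ℝ :=
  fderiv ℝ u z (z.1, (α+1) • z.2)

/-- Euclidean norm of the full gradient of `ρ`. -/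
def normGradRho {m n : ℕ} (α : ℝ) (z : E m n) : ℝ :=
  Real.sqrt ((∑ i, (fderiv ℝ (rho α) z (EuclideanSpace.single i 1, 0))^2)
    + (∑ j, (fderiv ℝ (rho α) z (0, EuclideanSpace.single j 1))^2))


/-- Dot product of two Grushin gradients. -/
def gradXdot {m n : ℕ} (α : ℝ) (u v : E m n → ℝ) (z : E m n) : ℝ :=
  (∑ i, fderiv ℝ u z (EuclideanSpace.single i 1, 0) *
        fderiv ℝ v z (EuclideanSpace.single i 1, 0))
  + ‖z.1‖ ^ (2*α) * (∑ j, fderiv ℝ u z (0, EuclideanSpace.single j 1) *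
        fderiv ℝ v z (0, EuclideanSpace.single j 1))

/- ### Auxiliary lemmas -/

lemma euc_sum {m : ℕ} (a : EuclideanSpace ℝ (Fin m)) :
    a = ∑ i, a i • EuclideanSpace.single i (1:ℝ) := by
  ext j
  rw [WithLp.ofLp_sum, Finset.sum_apply]
  simp [EuclideanSpace.single_apply]

lemma clm_expand {m n : ℕ} (L : E m n →L[ℝ] ℝ) (a : EuclideanSpace ℝ (Fin m))
    (b : EuclideanSpace ℝ (Fin n)) :
    L (a, b) = (∑ i, a i * L (EuclideanSpace.single i 1, 0))
      + ∑ j, b j * L (0, EuclideanSpace.single j 1) := by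
  have hab : (a, b) = ((∑ i, a i • ((EuclideanSpace.single i (1:ℝ), (0:EuclideanSpace ℝ (Fin n))) : E m n))
      + ∑ j, b j • (((0:EuclideanSpace ℝ (Fin m)), EuclideanSpace.single j (1:ℝ)) : E m n)) := by
    refine Prod.ext ?_ ?_ <;>
      simp [Prod.fst_sum, Prod.snd_sum, ← euc_sum]
  rw [hab]
  rw [map_add, map_sum, map_sum]
  congr 1 <;> refine Finset.sum_congr rfl fun i _ => ?_ <;>
    rw [L.map_smul, smul_eq_mul]

lemma rho_eq {m n : ℕ} (α : ℝ) (z : E m n) :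
    rho α z = ((‖z.1‖^2) ^ (α+1) + (α+1)^2 * ‖z.2‖^2) ^ (1/(2*(α+1))) := by
  rw [rho, Real.rpow_mul (norm_nonneg _), Real.rpow_two]

lemma hasFDerivAt_rho {m n : ℕ} (α : ℝ) (hα : 0 < α) (z : E m n) (hz : z.1 ≠ 0) :
    HasFDerivAt (rho (m := m) (n := n) α)
      (((1/(2*(α+1))) * ((‖z.1‖^2) ^ (α+1) + (α+1)^2 * ‖z.2‖^2) ^ (1/(2*(α+1)) - 1)) •
        ((((α+1) * (‖z.1‖^2) ^ (α+1-1)) •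
            (2 • ((innerSL ℝ z.1).comp (ContinuousLinearMap.fst ℝ _ _))))
          + (((α+1)^2 : ℝ) •
            (2 • ((innerSL ℝ z.2).comp (ContinuousLinearMap.snd ℝ _ _)))))) z := by
  have hx : ‖z.1‖ ≠ 0 := norm_ne_zero_iff.mpr hz
  have hs : (‖z.1‖^2 : ℝ) ≠ 0 := by positivity
  have h1 : HasFDerivAt (fun w : E m n => ‖w.1‖^2)
      (2 • ((innerSL ℝ z.1).comp (ContinuousLinearMap.fst ℝ _ _))) z :=
    (hasFDerivAt_fst (p := z)).norm_sq
  have h2 : HasDerivAt (fun t : ℝ => t ^ (α+1)) ((α+1) * (‖z.1‖^2) ^ (α+1-1)) (‖z.1‖^2) :=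
    Real.hasDerivAt_rpow_const (Or.inl hs)
  have h12 := h2.comp_hasFDerivAt z h1
  have h3 : HasFDerivAt (fun w : E m n => (α+1)^2 * ‖w.2‖^2)
      (((α+1)^2 : ℝ) • (2 • ((innerSL ℝ z.2).comp (ContinuousLinearMap.snd ℝ _ _)))) z :=
    ((hasFDerivAt_snd (p := z)).norm_sq).const_mul _
  have hq := h12.add h3
  have hQ : (0:ℝ) < (‖z.1‖^2) ^ (α+1) + (α+1)^2 * ‖z.2‖^2 := by
    have h1 : (0:ℝ) < (‖z.1‖^2) ^ (α+1) := by
      apply Real.rpow_pos_of_pos; positivity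
    nlinarith [sq_nonneg (‖z.2‖), sq_nonneg (α+1), mul_nonneg (sq_nonneg (α+1)) (sq_nonneg ‖z.2‖)]
  have h4 : HasDerivAt (fun t : ℝ => t ^ (1/(2*(α+1))))
      ((1/(2*(α+1))) * ((‖z.1‖^2) ^ (α+1) + (α+1)^2 * ‖z.2‖^2) ^ (1/(2*(α+1)) - 1))
      ((‖z.1‖^2) ^ (α+1) + (α+1)^2 * ‖z.2‖^2) :=
    Real.hasDerivAt_rpow_const (Or.inl hQ.ne')
  have := h4.comp_hasFDerivAt z hq
  have hfun : rho (m := m) (n := n) α =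
      fun w => ((‖w.1‖^2) ^ (α+1) + (α+1)^2 * ‖w.2‖^2) ^ (1/(2*(α+1))) := by
    funext w
    exact rho_eq α w
  rw [hfun]
  exact this

lemma fderiv_rho_apply {m n : ℕ} (α : ℝ) (hα : 0 < α) (z : E m n) (hz : z.1 ≠ 0) (v : E m n) :
    fderiv ℝ (rho α) z v
      = ((‖z.1‖^2) ^ (α+1) + (α+1)^2 * ‖z.2‖^2) ^ (1/(2*(α+1)) - 1) *
        (‖z.1‖ ^ (2*α) * (inner ℝ z.1 v.1 : ℝ) + (α+1) * (inner ℝ z.2 v.2 : ℝ)) := by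
  rw [(hasFDerivAt_rho α hα z hz).fderiv]
  have hx : ‖z.1‖ ≠ 0 := norm_ne_zero_iff.mpr hz
  have hxa : (‖z.1‖^2 : ℝ) ^ (α+1-1) = ‖z.1‖ ^ (2*α) := by
    rw [← Real.rpow_two, ← Real.rpow_mul (norm_nonneg _), show (2:ℝ)*(α+1-1) = 2*α by ring]
  have ha1 : (α:ℝ) + 1 ≠ 0 := by positivity
  simp only [ContinuousLinearMap.smul_apply, ContinuousLinearMap.add_apply,
    ContinuousLinearMap.comp_apply, ContinuousLinearMap.coe_fst', ContinuousLinearMap.coe_snd',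
    innerSL_apply_apply, smul_eq_mul, nsmul_eq_mul, Nat.cast_ofNat, hxa]
  field_simp

/-- `∇_X u · ∇_X ρ = (Zu/ρ) ψ` for smooth `u` away from `{x = 0}`. -/
theorem gradX_dot_gradX_rho {m n : ℕ} (hm : 1 ≤ m) (hn : 1 ≤ n) (α : ℝ) (hα : 0 < α)
    (u : E m n → ℝ) (hu : ContDiff ℝ (⊤ : ℕ∞) u) (z : E m n) (hz : z.1 ≠ 0) :
    gradXdot α u (rho α) z = (Zop α u z / rho α z) * psi α z := by
  have hx : ‖z.1‖ ≠ 0 := norm_ne_zero_iff.mpr hz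
  have ha1 : (α:ℝ) + 1 ≠ 0 := by positivity
  set X : ℝ := ‖z.1‖ ^ (2*α) with hXdef
  set Q : ℝ := (‖z.1‖^2) ^ (α+1) + (α+1)^2 * ‖z.2‖^2 with hQdef
  have hQ : (0:ℝ) < Q := by
    have h1 : (0:ℝ) < (‖z.1‖^2) ^ (α+1) := by
      apply Real.rpow_pos_of_pos; positivity
    have h2 : (0:ℝ) ≤ (α+1)^2 * ‖z.2‖^2 := by positivity
    rw [hQdef]; linarith
  set e : ℝ := 1/(2*(α+1)) - 1 with hedef
  have hrho : rho α z = Q ^ (1/(2*(α+1))) := rho_eq α z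
  -- directional derivatives of rho
  have hri : ∀ i, fderiv ℝ (rho α) z (EuclideanSpace.single i 1, 0)
      = Q ^ e * (X * z.1 i) := by
    intro i
    rw [fderiv_rho_apply α hα z hz]
    have h1 : (inner ℝ z.1 (EuclideanSpace.single i (1:ℝ)) : ℝ) = z.1 i := by
      rw [EuclideanSpace.inner_single_right]; simp
    have h2 : (inner ℝ z.2 (0 : EuclideanSpace ℝ (Fin n)) : ℝ) = 0 := inner_zero_right _
    rw [h1, h2]
    ring
  have hrj : ∀ j, fderiv ℝ (rho α) z ((0 : EuclideanSpace ℝ (Fin m)), EuclideanSpace.single j 1)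
      = Q ^ e * ((α+1) * z.2 j) := by
    intro j
    rw [fderiv_rho_apply α hα z hz]
    have h1 : (inner ℝ z.1 (0 : EuclideanSpace ℝ (Fin m)) : ℝ) = 0 := inner_zero_right _
    have h2 : (inner ℝ z.2 (EuclideanSpace.single j (1:ℝ)) : ℝ) = z.2 j := by
      rw [EuclideanSpace.inner_single_right]; simp
    rw [h1, h2]
    ring
  -- expansion of Zop
  have hZ : Zop α u z = (∑ i, z.1 i * fderiv ℝ u z (EuclideanSpace.single i 1, 0))
      + ∑ j, ((α+1) * z.2 j) * fderiv ℝ u z (0, EuclideanSpace.single j 1) := by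
    rw [Zop, clm_expand]
    simp only [PiLp.smul_apply, smul_eq_mul]
  -- compute the left-hand side
  have hLHS : gradXdot α u (rho α) z = Q ^ e * X * Zop α u z := by
    rw [gradXdot, hZ]
    have e1 : ∑ i, fderiv ℝ u z (EuclideanSpace.single i 1, 0) *
        fderiv ℝ (rho α) z (EuclideanSpace.single i 1, 0)
        = Q ^ e * X * ∑ i, z.1 i * fderiv ℝ u z (EuclideanSpace.single i 1, 0) := by
      rw [Finset.mul_sum]
      refine Finset.sum_congr rfl fun i _ => ?_
      rw [hri i]; ring
    have e2 : ∑ j, fderiv ℝ u z (0, EuclideanSpace.single j 1) *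
        fderiv ℝ (rho α) z (0, EuclideanSpace.single j 1)
        = Q ^ e * (α+1) * ∑ j, z.2 j * fderiv ℝ u z (0, EuclideanSpace.single j 1) := by
      rw [Finset.mul_sum]
      refine Finset.sum_congr rfl fun j _ => ?_
      rw [hrj j]; ring
    have e3 : ∑ j, ((α+1) * z.2 j) * fderiv ℝ u z (0, EuclideanSpace.single j 1)
        = (α+1) * ∑ j, z.2 j * fderiv ℝ u z (0, EuclideanSpace.single j 1) := by
      rw [Finset.mul_sum]
      refine Finset.sum_congr rfl fun j _ => ?_
      ring
    rw [e1, e2, e3]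
    ring
  -- the key exponent identity
  have hrho2a : (rho α z) ^ (2*α) = Q ^ ((2*α)/(2*(α+1))) := by
    rw [hrho, ← Real.rpow_mul hQ.le]
    congr 1
    field_simp
  have key : Q ^ e * (Q ^ (1/(2*(α+1))) * Q ^ ((2*α)/(2*(α+1)))) = 1 := by
    rw [← Real.rpow_add hQ, ← Real.rpow_add hQ,
      show e + (1/(2*(α+1)) + (2*α)/(2*(α+1))) = 0 by rw [hedef]; field_simp; ring]
    exact Real.rpow_zero Q
  rw [hLHS, psi, hrho2a, hrho, div_mul_div_comm,
    eq_div_iff (by positivity)]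
  linear_combination X * Zop α u z * key
end
end

section
/- For any γ ∈ ℝ, the Baouendi-Grushin Laplacian of ρ^γ satisfies Δ_X(ρ^γ) = γ(Q − 2 + γ) ρ^{γ−2} ψ on {x ≠ 0}; in particular Δ_X(ρ^{−4}) = −4(Q − 6) ρ^{−6} ψ. -/
open MeasureTheory Real

noncomputable section

/-!
Write `ρ^γ = N^β` with `N = ρ^{2(α+1)} = (|x|²)^{α+1} + (α+1)²|y|²` and `β = γ/(2(α+1))`; `N` is
smooth on `{x ≠ 0}`. In the second derivatives of `N^β`, the terms carrying `β - 1` sum to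
`2(α+1)(β-1)|x|^{2α}(|x|^{2(α+1)} + (α+1)²|y|²) N^{β-2} = 2(α+1)(β-1)|x|^{2α} N^{β-1}` exactly
because `Δ_X` weights the `y`-directions by `|x|^{2α}`. What is left is
`γ(Q-2+γ)|x|^{2α} N^{β-1}`, and `|x|^{2α} N^{β-1} = ρ^{γ-2} ψ`.
-/

namespace Grushin

open ContinuousLinearMap Topology
open scoped RealInnerProductSpace

section Gauge

variable {X Y : Type*} [NormedAddCommGroup X] [NormedAddCommGroup Y]

/-- `ρ^{2(α+1)}`, with `|x|^{2(α+1)}` written as `(‖x‖²)^{α+1}`. -/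
def gaugePow (α : ℝ) (w : X × Y) : ℝ := (‖w.1‖ ^ 2) ^ (α + 1) + (α + 1) ^ 2 * ‖w.2‖ ^ 2

variable {α : ℝ} {w : X × Y}

lemma rpow_two_mul_norm (α : ℝ) (x : X) : ‖x‖ ^ (2 * α) = (‖x‖ ^ 2) ^ α := by
  rw [Real.rpow_mul (norm_nonneg x), Real.rpow_two]

lemma gaugePow_pos (hw : w.1 ≠ 0) : 0 < gaugePow α w := by
  have : 0 < ‖w.1‖ ^ 2 := by positivity
  unfold gaugePow; positivity

lemma isOpen_fst_ne_zero : IsOpen {w : X × Y | w.1 ≠ 0} :=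
  isOpen_compl_singleton.preimage continuous_fst

variable [InnerProductSpace ℝ X] [InnerProductSpace ℝ Y]

lemma hasFDerivAt_norm_sq_fst (w : X × Y) :
    HasFDerivAt (fun w : X × Y => ‖w.1‖ ^ 2) (2 • (innerSL ℝ w.1).comp (fst ℝ X Y)) w :=
  hasFDerivAt_fst.norm_sq

lemma hasFDerivAt_rpow_norm_sq_fst (α : ℝ) (hw : w.1 ≠ 0) :
    HasFDerivAt (fun w : X × Y => (‖w.1‖ ^ 2) ^ α)
      ((α * (‖w.1‖ ^ 2) ^ (α - 1)) • 2 • (innerSL ℝ w.1).comp (fst ℝ X Y)) w :=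
  (hasFDerivAt_norm_sq_fst w).rpow_const (Or.inl (by positivity))

lemma hasFDerivAt_gaugePow (hw : w.1 ≠ 0) :
    HasFDerivAt (gaugePow α) ((2 * (α + 1)) • ((‖w.1‖ ^ 2) ^ α • (innerSL ℝ w.1).comp (fst ℝ X Y)
      + (α + 1) • (innerSL ℝ w.2).comp (snd ℝ X Y))) w := by
  have hs : ‖w.1‖ ^ 2 ≠ 0 := by positivity
  have h : HasFDerivAt (gaugePow α) _ w :=
    ((hasFDerivAt_norm_sq_fst w).rpow_const (p := α + 1) (Or.inl hs)).add
      ((hasFDerivAt_snd.norm_sq).const_mul ((α + 1) ^ 2))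
  refine h.congr_fderiv ?_
  ext v <;> simp only [add_sub_cancel_right, add_comp, smul_comp, add_apply, smul_apply, comp_apply,
    inl_apply, inr_apply, coe_fst', coe_snd', coe_innerSL_apply, nsmul_eq_mul, Nat.cast_ofNat,
    smul_eq_mul, inner_zero_right, mul_zero, add_zero, zero_add, smul_add] <;> ring

lemma fderiv_gaugePow_rpow_inl (β : ℝ) (hw : w.1 ≠ 0) (a : X) :
    fderiv ℝ (fun w => gaugePow α w ^ β) w (a, 0)
      = 2 * (α + 1) * β * gaugePow α w ^ (β - 1) * (‖w.1‖ ^ 2) ^ α * ⟪w.1, a⟫ := by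
  rw [((hasFDerivAt_gaugePow hw).rpow_const (Or.inl (gaugePow_pos hw).ne')).fderiv]
  simp only [smul_add, add_apply, smul_apply, comp_apply, coe_fst', coe_snd', coe_innerSL_apply,
    smul_eq_mul, inner_zero_right, mul_zero, add_zero]
  ring

lemma fderiv_gaugePow_rpow_inr (β : ℝ) (hw : w.1 ≠ 0) (b : Y) :
    fderiv ℝ (fun w => gaugePow α w ^ β) w (0, b)
      = 2 * (α + 1) ^ 2 * β * gaugePow α w ^ (β - 1) * ⟪w.2, b⟫ := by
  rw [((hasFDerivAt_gaugePow hw).rpow_const (Or.inl (gaugePow_pos hw).ne')).fderiv]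
  simp only [smul_add, add_apply, smul_apply, comp_apply, coe_fst', coe_snd', coe_innerSL_apply,
    smul_eq_mul, inner_zero_right, mul_zero, zero_add]
  ring

lemma fderiv_fderiv_gaugePow_rpow_inl (β : ℝ) {z : X × Y} (hz : z.1 ≠ 0) (a : X) :
    fderiv ℝ (fun w => fderiv ℝ (fun w => gaugePow α w ^ β) w (a, 0)) z (a, 0)
      = 2 * (α + 1) * β * (gaugePow α z ^ (β - 1) * (‖z.1‖ ^ 2) ^ α * ‖a‖ ^ 2
        + (2 * α * gaugePow α z ^ (β - 1) * (‖z.1‖ ^ 2) ^ (α - 1)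
          + 2 * (α + 1) * (β - 1) * gaugePow α z ^ (β - 2) * ((‖z.1‖ ^ 2) ^ α) ^ 2)
          * ⟪z.1, a⟫ ^ 2) := by
  have hloc : (fun w => fderiv ℝ (fun w => gaugePow α w ^ β) w (a, 0)) =ᶠ[𝓝 z]
      fun w => 2 * (α + 1) * β * gaugePow α w ^ (β - 1) * (‖w.1‖ ^ 2) ^ α * ⟪w.1, a⟫ :=
    Filter.eventually_of_mem (isOpen_fst_ne_zero.mem_nhds hz)
      fun w hw => fderiv_gaugePow_rpow_inl β hw a
  have hN := (hasFDerivAt_gaugePow (α := α) hz).rpow_const (p := β - 1)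
    (Or.inl (gaugePow_pos hz).ne')
  have h := (((hN.const_mul (2 * (α + 1) * β)).fun_mul (hasFDerivAt_rpow_norm_sq_fst α hz)).fun_mul
    (hasFDerivAt_fst.inner ℝ (hasFDerivAt_const a z)))
  rw [hloc.fderiv_eq, h.fderiv, show β - 1 - 1 = β - 2 by ring]
  simp only [smul_add, add_apply, smul_apply, comp_apply, ContinuousLinearMap.prod_apply, coe_fst',
    coe_snd', zero_apply, fderivInnerCLM_apply, inner_zero_right, real_inner_self_eq_norm_sq,
    coe_innerSL_apply, nsmul_eq_mul, Nat.cast_ofNat, smul_eq_mul, mul_zero, add_zero, zero_add]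
  ring

lemma fderiv_fderiv_gaugePow_rpow_inr (β : ℝ) {z : X × Y} (hz : z.1 ≠ 0) (b : Y) :
    fderiv ℝ (fun w => fderiv ℝ (fun w => gaugePow α w ^ β) w (0, b)) z (0, b)
      = 2 * (α + 1) ^ 2 * β * (gaugePow α z ^ (β - 1) * ‖b‖ ^ 2
        + 2 * (α + 1) ^ 2 * (β - 1) * gaugePow α z ^ (β - 2) * ⟪z.2, b⟫ ^ 2) := by
  have hloc : (fun w => fderiv ℝ (fun w => gaugePow α w ^ β) w (0, b)) =ᶠ[𝓝 z]
      fun w => 2 * (α + 1) ^ 2 * β * gaugePow α w ^ (β - 1) * ⟪w.2, b⟫ :=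
    Filter.eventually_of_mem (isOpen_fst_ne_zero.mem_nhds hz)
      fun w hw => fderiv_gaugePow_rpow_inr β hw b
  have hN := (hasFDerivAt_gaugePow (α := α) hz).rpow_const (p := β - 1)
    (Or.inl (gaugePow_pos hz).ne')
  have h := (hN.const_mul (2 * (α + 1) ^ 2 * β)).fun_mul
    (hasFDerivAt_snd.inner ℝ (hasFDerivAt_const b z))
  rw [hloc.fderiv_eq, h.fderiv, show β - 1 - 1 = β - 2 by ring]
  simp only [smul_add, add_apply, smul_apply, comp_apply, ContinuousLinearMap.prod_apply, coe_fst',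
    coe_snd', zero_apply, fderivInnerCLM_apply, inner_zero_right, real_inner_self_eq_norm_sq,
    coe_innerSL_apply, smul_eq_mul, mul_zero, zero_add]
  ring

end Gauge

section Euclidean

variable {m n : ℕ} {α : ℝ}

lemma sum_inner_single_sq {ι : Type*} [Fintype ι] [DecidableEq ι] (x : EuclideanSpace ℝ ι) :
    ∑ i, ⟪x, EuclideanSpace.single i 1⟫ ^ 2 = ‖x‖ ^ 2 := by
  simp [EuclideanSpace.inner_single_right, EuclideanSpace.real_norm_sq_eq]

lemma lapX_gaugePow_rpow {z : E m n} (hz : z.1 ≠ 0) (β : ℝ) :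
    lapX α (fun w => gaugePow α w ^ β) z
      = 2 * (α + 1) * β * (m + (α + 1) * n - 2 + 2 * (α + 1) * β)
        * (‖z.1‖ ^ 2) ^ α * gaugePow α z ^ (β - 1) := by
  have hs : 0 < ‖z.1‖ ^ 2 := by positivity
  have hN := gaugePow_pos (α := α) hz
  simp only [lapX, fderiv_fderiv_gaugePow_rpow_inl β hz, fderiv_fderiv_gaugePow_rpow_inr β hz,
    Finset.sum_add_distrib, ← Finset.mul_sum, sum_inner_single_sq,
    PiLp.norm_single, norm_one, one_pow, Finset.sum_const, Finset.card_univ, Fintype.card_fin,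
    nsmul_eq_mul, mul_one, rpow_two_mul_norm]
  rw [Real.rpow_sub_one hs.ne' α, show β - 2 = β - 1 - 1 by ring,
    Real.rpow_sub_one hN.ne' (β - 1)]
  have hNs : gaugePow α z = (‖z.1‖ ^ 2) ^ α * ‖z.1‖ ^ 2 + (α + 1) ^ 2 * ‖z.2‖ ^ 2 := by
    rw [gaugePow, Real.rpow_add_one hs.ne']
  generalize gaugePow α z ^ (β - 1) = B
  generalize gaugePow α z = N at *
  subst hNs
  field_simp
  ring

lemma rho_rpow (α γ : ℝ) (w : E m n) : rho α w ^ γ = gaugePow α w ^ (γ / (2 * (α + 1))) := by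
  rw [rho, ← Real.rpow_mul (by positivity), rpow_two_mul_norm, ← gaugePow]
  ring_nf

lemma rho_rpow_sub_two_mul_psi (hα : α + 1 ≠ 0) (γ : ℝ) {z : E m n} (hz : z.1 ≠ 0) :
    rho α z ^ (γ - 2) * psi α z
      = (‖z.1‖ ^ 2) ^ α * gaugePow α z ^ (γ / (2 * (α + 1)) - 1) := by
  rw [psi, rho_rpow, rho_rpow, rpow_two_mul_norm, mul_div_left_comm,
    ← Real.rpow_sub (gaugePow_pos hz)]
  congr 2
  field_simp
  ring

end Euclidean

end Grushin

theorem lapX_rho_pow_general {m n : ℕ} (α : ℝ) (hα : 0 < α)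
    (z : E m n) (hz : z.1 ≠ 0) :
    (∀ γ : ℝ, lapX α (fun w => rho α w ^ γ) z
      = γ * (((m : ℝ) + (α+1) * n) - 2 + γ) * (rho α z) ^ (γ - 2) * psi α z) ∧
    lapX α (fun w => rho α w ^ (-4 : ℝ)) z
      = -4 * (((m : ℝ) + (α+1) * n) - 6) * (rho α z) ^ (-6 : ℝ) * psi α z := by
  have hα₁ : α + 1 ≠ 0 := by positivity
  have key (γ : ℝ) : lapX α (fun w => rho α w ^ γ) z
      = γ * (((m : ℝ) + (α+1) * n) - 2 + γ) * (rho α z) ^ (γ - 2) * psi α z := by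
    have hγ : 2 * (α + 1) * (γ / (2 * (α + 1))) = γ := by field_simp
    simp only [Grushin.rho_rpow α γ, Grushin.lapX_gaugePow_rpow hz, hγ]
    rw [mul_assoc _ (rho α z ^ (γ - 2)), Grushin.rho_rpow_sub_two_mul_psi hα₁ γ hz]
    ring
  refine ⟨key, ?_⟩
  rw [key, show (-4 : ℝ) - 2 = -6 by norm_num]
  ring

/-- `Δ_X (ρ^γ) = γ(Q−2+γ) ρ^{γ−2} ψ` on `{x ≠ 0}`; in particular
`Δ_X (ρ^{−4}) = −4(Q−6) ρ^{−6} ψ`. -/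
theorem lapX_rho_pow {m n : ℕ} (hm : 1 ≤ m) (hn : 1 ≤ n) (α : ℝ) (hα : 0 < α)
    (z : E m n) (hz : z.1 ≠ 0) :
    (∀ γ : ℝ, lapX α (fun w => rho α w ^ γ) z
      = γ * (((m : ℝ) + (α+1) * n) - 2 + γ) * (rho α z) ^ (γ - 2) * psi α z) ∧
    lapX α (fun w => rho α w ^ (-4 : ℝ)) z
      = -4 * (((m : ℝ) + (α+1) * n) - 6) * (rho α z) ^ (-6 : ℝ) * psi α z :=
  lapX_rho_pow_general α hα z hz
end
end
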